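/- The function (x,y) ↦ ∫₀^∞ (k e^{ky}/(k−1)) [sin k(x − π) − sin k(x + π)] dk is harmonic in the open lower half-plane away from the points (±π, 0). -/

import Mathlib

/-!
Since `sin k(x - π) - sin k(x + π) = -2 sin(kπ) cos(kx)`, the potential is the superposition
`∫₀^∞ a(k) e^{ky} cos(kx) dk` of the harmonic waves `e^{ky} cos(kx + θ)` with amplitude
`a(k) = -2k sin(kπ)/(k - 1)`, and `|a(k)| ≤ 2πk` because `sin(kπ)` vanishes at `k = 1`.
For `y < 0` the factor `e^{ky}` dominates every power of `k`, locally uniformly in `y`, so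
the integral may be differentiated twice under the integral sign. Each derivative multiplies
the amplitude by `k`; an `x`-derivative also shifts the phase `θ` by `π/2`, a `y`-derivative
does not. Hence `∂ₓ²φ` is the integral of `a(k) k² e^{ky} cos(kx + π) = -a(k) k² e^{ky} cos(kx)`,
which is `-∂ᵧ²φ`.
-/

open Real MeasureTheory Set Filter Topology

namespace TrappedMode

noncomputable section

def wave (θ k : ℝ) (p : ℝ × ℝ) : ℝ := exp (k * p.2) * cos (k * p.1 + θ)

def waveFDeriv (θ k : ℝ) (p : ℝ × ℝ) : ℝ × ℝ →L[ℝ] ℝ :=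
  k • (wave (θ + π / 2) k p • ContinuousLinearMap.fst ℝ ℝ ℝ +
    wave θ k p • ContinuousLinearMap.snd ℝ ℝ ℝ)

lemma waveFDeriv_apply (θ k : ℝ) (p v : ℝ × ℝ) :
    waveFDeriv θ k p v = v.1 * (k * wave (θ + π / 2) k p) + v.2 * (k * wave θ k p) := by
  simp only [waveFDeriv, smul_apply, add_apply,
    ContinuousLinearMap.coe_fst', ContinuousLinearMap.coe_snd', smul_eq_mul]
  ring

lemma wave_add_pi (θ k : ℝ) (p : ℝ × ℝ) : wave (θ + π) k p = -wave θ k p := by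
  rw [wave, wave, ← add_assoc, cos_add_pi, mul_neg]

lemma abs_wave_le (θ k : ℝ) (p : ℝ × ℝ) : |wave θ k p| ≤ exp (k * p.2) := by
  rw [wave, abs_mul, abs_exp]
  exact mul_le_of_le_one_right (exp_nonneg _) (abs_cos_le_one _)

lemma continuous_wave (θ : ℝ) (p : ℝ × ℝ) : Continuous fun k => wave θ k p := by
  unfold wave; fun_prop

lemma continuous_waveFDeriv (θ : ℝ) (p : ℝ × ℝ) :
    Continuous fun k => waveFDeriv θ k p := by
  unfold waveFDeriv wave; fun_prop

lemma hasFDerivAt_wave (θ k : ℝ) (p : ℝ × ℝ) :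
    HasFDerivAt (wave θ k) (waveFDeriv θ k p) p := by
  have hexp : HasFDerivAt (fun q : ℝ × ℝ => exp (k * q.2))
      ((exp (k * p.2) * (k * 1)) • ContinuousLinearMap.snd ℝ ℝ ℝ) p :=
    ((hasDerivAt_id p.2).const_mul k).exp.comp_hasFDerivAt p hasFDerivAt_snd
  have hcos : HasFDerivAt (fun q : ℝ × ℝ => cos (k * q.1 + θ))
      ((-sin (k * p.1 + θ) * (k * 1)) • ContinuousLinearMap.fst ℝ ℝ ℝ) p :=
    (((hasDerivAt_id p.1).const_mul k).add_const θ).cos.comp_hasFDerivAt p hasFDerivAt_fst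
  refine (hexp.mul hcos).congr_fderiv (ContinuousLinearMap.ext fun v => ?_)
  simp only [add_apply, smul_apply, ContinuousLinearMap.coe_fst', ContinuousLinearMap.coe_snd',
    smul_eq_mul, waveFDeriv_apply, wave, ← add_assoc, cos_add_pi_div_two]
  ring

lemma norm_waveFDeriv_le (θ : ℝ) {k : ℝ} (hk : 0 ≤ k) (p : ℝ × ℝ) :
    ‖waveFDeriv θ k p‖ ≤ 2 * k * exp (k * p.2) := by
  refine ContinuousLinearMap.opNorm_le_bound _ (by positivity) fun v => ?_
  rw [waveFDeriv_apply, norm_eq_abs]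
  have h1 : |v.1| ≤ ‖v‖ := norm_fst_le v
  have h2 : |v.2| ≤ ‖v‖ := norm_snd_le v
  calc |v.1 * (k * wave (θ + π / 2) k p) + v.2 * (k * wave θ k p)|
      ≤ ‖v‖ * (k * exp (k * p.2)) + ‖v‖ * (k * exp (k * p.2)) := by
        refine (abs_add_le _ _).trans (add_le_add ?_ ?_) <;>
        · rw [abs_mul, abs_mul, abs_of_nonneg hk]
          gcongr
          · exact abs_wave_le _ _ _
    _ = 2 * k * exp (k * p.2) * ‖v‖ := by ring

lemma integrableOn_pow_mul_exp_mul (n : ℕ) {b : ℝ} (hb : b < 0) :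
    IntegrableOn (fun k : ℝ => k ^ n * exp (k * b)) (Ioi 0) := by
  have h := integrableOn_rpow_mul_exp_neg_mul_rpow (s := n) (p := 1) (b := -b)
    (by linarith [n.cast_nonneg (α := ℝ)]) one_pos (neg_pos.mpr hb)
  simpa [rpow_natCast, mul_comm b] using h

lemma integrableOn_of_norm_le_pow_mul_exp {E : Type*} [NormedAddCommGroup E] {f : ℝ → E}
    (hf : AEStronglyMeasurable f (volume.restrict (Ioi 0))) {C b : ℝ} {n : ℕ} (hb : b < 0)
    (hle : ∀ k ∈ Ioi (0 : ℝ), ‖f k‖ ≤ C * (k ^ n * exp (k * b))) :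
    IntegrableOn f (Ioi 0) :=
  ((integrableOn_pow_mul_exp_mul n hb).const_mul C).mono' hf
    ((ae_restrict_iff' measurableSet_Ioi).mpr (.of_forall hle))

def waveIntegral (a : ℝ → ℝ) (θ : ℝ) (p : ℝ × ℝ) : ℝ := ∫ k in Ioi 0, a k * wave θ k p

section PolynomialAmplitude

variable {a : ℝ → ℝ} {C : ℝ} {m : ℕ}

lemma norm_smul_waveFDeriv_le (hbd : ∀ k ∈ Ioi (0 : ℝ), |a k| ≤ C * k ^ m) (θ : ℝ)
    {k : ℝ} (hk : k ∈ Ioi 0) (q : ℝ × ℝ) :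
    ‖a k • waveFDeriv θ k q‖ ≤ 2 * C * (k ^ (m + 1) * exp (k * q.2)) := by
  have hk0 : 0 ≤ k := le_of_lt hk
  calc ‖a k • waveFDeriv θ k q‖ ≤ C * k ^ m * (2 * k * exp (k * q.2)) := by
        rw [norm_smul, norm_eq_abs]
        exact mul_le_mul (hbd k hk) (norm_waveFDeriv_le θ hk0 q) (norm_nonneg _)
          ((abs_nonneg _).trans (hbd k hk))
    _ = 2 * C * (k ^ (m + 1) * exp (k * q.2)) := by ring

lemma integrableOn_smul_waveFDeriv (ha : Measurable a)
    (hbd : ∀ k ∈ Ioi (0 : ℝ), |a k| ≤ C * k ^ m) (θ : ℝ) {p : ℝ × ℝ} (hp : p.2 < 0) :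
    IntegrableOn (fun k => a k • waveFDeriv θ k p) (Ioi 0) :=
  integrableOn_of_norm_le_pow_mul_exp
    (ha.aestronglyMeasurable.smul (continuous_waveFDeriv θ p).aestronglyMeasurable) hp
    fun _ hk => norm_smul_waveFDeriv_le hbd θ hk p

lemma hasFDerivAt_waveIntegral (ha : Measurable a)
    (hbd : ∀ k ∈ Ioi (0 : ℝ), |a k| ≤ C * k ^ m) (θ : ℝ) {p : ℝ × ℝ} (hp : p.2 < 0) :
    HasFDerivAt (waveIntegral a θ) (∫ k in Ioi 0, a k • waveFDeriv θ k p) p := by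
  have hp2 : p.2 / 2 < 0 := by linarith
  have hs : {q : ℝ × ℝ | q.2 < p.2 / 2} ∈ 𝓝 p :=
    (isOpen_lt continuous_snd continuous_const).mem_nhds (show p.2 < p.2 / 2 by linarith)
  have hmeas (q : ℝ × ℝ) : AEStronglyMeasurable (fun k => a k * wave θ k q)
      (volume.restrict (Ioi 0)) :=
    (ha.mul (continuous_wave θ q).measurable).aestronglyMeasurable
  refine hasFDerivAt_integral_of_dominated_of_fderiv_le (F' := fun q k => a k • waveFDeriv θ k q)
    hs (.of_forall hmeas) ?_
    (integrableOn_smul_waveFDeriv ha hbd θ hp).aestronglyMeasurable ?_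
    ((integrableOn_pow_mul_exp_mul (m + 1) hp2).const_mul (2 * C)) ?_
  · refine integrableOn_of_norm_le_pow_mul_exp (C := C) (n := m) (hmeas p) hp fun k hk => ?_
    rw [norm_mul, norm_eq_abs, norm_eq_abs, ← mul_assoc]
    exact mul_le_mul (hbd k hk) (abs_wave_le θ k p) (abs_nonneg _)
      ((abs_nonneg _).trans (hbd k hk))
  · refine (ae_restrict_iff' measurableSet_Ioi).mpr (.of_forall fun k hk q hq => ?_)
    have hC : 0 ≤ C := by simpa using (abs_nonneg (a 1)).trans (hbd 1 (mem_Ioi.mpr one_pos))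
    refine (norm_smul_waveFDeriv_le hbd θ hk q).trans ?_
    have hk0 : 0 < k := hk
    gcongr
    exact le_of_lt hq
  · exact .of_forall fun k q _ => (hasFDerivAt_wave θ k q).const_mul (a k)

lemma fderiv_waveIntegral_fst (ha : Measurable a)
    (hbd : ∀ k ∈ Ioi (0 : ℝ), |a k| ≤ C * k ^ m) (θ : ℝ) {p : ℝ × ℝ} (hp : p.2 < 0) :
    fderiv ℝ (waveIntegral a θ) p (1, 0) = waveIntegral (fun k => a k * k) (θ + π / 2) p := by
  rw [(hasFDerivAt_waveIntegral ha hbd θ hp).fderiv,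
    ContinuousLinearMap.integral_apply (integrableOn_smul_waveFDeriv ha hbd θ hp)]
  simp only [smul_apply, waveFDeriv_apply, waveIntegral]
  congr 1 with k
  simp only [smul_eq_mul]
  ring

lemma fderiv_waveIntegral_snd (ha : Measurable a)
    (hbd : ∀ k ∈ Ioi (0 : ℝ), |a k| ≤ C * k ^ m) (θ : ℝ) {p : ℝ × ℝ} (hp : p.2 < 0) :
    fderiv ℝ (waveIntegral a θ) p (0, 1) = waveIntegral (fun k => a k * k) θ p := by
  rw [(hasFDerivAt_waveIntegral ha hbd θ hp).fderiv,
    ContinuousLinearMap.integral_apply (integrableOn_smul_waveFDeriv ha hbd θ hp)]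
  simp only [smul_apply, waveFDeriv_apply, waveIntegral]
  congr 1 with k
  simp only [smul_eq_mul]
  ring

lemma waveIntegral_add_pi (a : ℝ → ℝ) (θ : ℝ) (p : ℝ × ℝ) :
    waveIntegral a (θ + π) p = -waveIntegral a θ p := by
  simp only [waveIntegral, wave_add_pi, mul_neg, integral_neg]

lemma laplacian_waveIntegral (ha : Measurable a)
    (hbd : ∀ k ∈ Ioi (0 : ℝ), |a k| ≤ C * k ^ m) (θ : ℝ) {p : ℝ × ℝ} (hp : p.2 < 0) :
    fderiv ℝ (fun q => fderiv ℝ (waveIntegral a θ) q (1, 0)) p (1, 0) +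
      fderiv ℝ (fun q => fderiv ℝ (waveIntegral a θ) q (0, 1)) p (0, 1) = 0 := by
  have ha' : Measurable fun k => a k * k := ha.mul measurable_id
  have hbd' : ∀ k ∈ Ioi (0 : ℝ), |a k * k| ≤ C * k ^ (m + 1) := fun k hk => by
    rw [abs_mul, abs_of_pos (show 0 < k from hk), pow_succ, ← mul_assoc]
    exact mul_le_mul_of_nonneg_right (hbd k hk) (le_of_lt hk)
  have hlower : ∀ᶠ q : ℝ × ℝ in 𝓝 p, q.2 < 0 := continuous_snd.continuousAt.eventually_lt
    continuousAt_const hp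
  have hx : (fun q => fderiv ℝ (waveIntegral a θ) q (1, 0)) =ᶠ[𝓝 p]
      waveIntegral (fun k => a k * k) (θ + π / 2) :=
    hlower.mono fun q hq => fderiv_waveIntegral_fst ha hbd θ hq
  have hy : (fun q => fderiv ℝ (waveIntegral a θ) q (0, 1)) =ᶠ[𝓝 p]
      waveIntegral (fun k => a k * k) θ :=
    hlower.mono fun q hq => fderiv_waveIntegral_snd ha hbd θ hq
  rw [hx.fderiv_eq, hy.fderiv_eq, fderiv_waveIntegral_fst ha' hbd' _ hp,
    fderiv_waveIntegral_snd ha' hbd' _ hp, add_assoc, add_halves, waveIntegral_add_pi,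
    neg_add_cancel]

end PolynomialAmplitude

def amplitude (k : ℝ) : ℝ := -2 * k * sin (k * π) / (k - 1)

lemma measurable_amplitude : Measurable amplitude := by
  unfold amplitude; fun_prop

lemma abs_amplitude_le {k : ℝ} (hk : 0 < k) : |amplitude k| ≤ 2 * π * k := by
  have hsin : |sin (k * π)| ≤ π * |k - 1| :=
    calc |sin (k * π)| = |sin ((k - 1) * π)| := by rw [sub_mul, one_mul, sin_sub_pi, abs_neg]
      _ ≤ |(k - 1) * π| := abs_sin_le_abs
      _ = π * |k - 1| := by rw [abs_mul, abs_of_pos pi_pos, mul_comm]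
  rw [amplitude, abs_div]
  refine div_le_of_le_mul₀ (abs_nonneg _) (by positivity) ?_
  calc |-2 * k * sin (k * π)| = 2 * k * |sin (k * π)| := by
        rw [abs_mul, abs_mul, abs_of_pos hk]; norm_num
    _ ≤ 2 * k * (π * |k - 1|) := by gcongr
    _ = 2 * π * k * |k - 1| := by ring

lemma integrand_eq_amplitude_mul_wave (k : ℝ) (r : ℝ × ℝ) :
    k * exp (k * r.2) / (k - 1) * (sin (k * (r.1 - π)) - sin (k * (r.1 + π))) =
      amplitude k * wave 0 k r := by
  simp only [amplitude, wave, add_zero, mul_sub, mul_add, sin_sub, sin_add]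
  ring

end

end TrappedMode

/-- The nondimensional trapped-mode potential
`φ₀(x,y) = ∫₀^∞ k e^{ky}/(k-1) [sin k(x-π) - sin k(x+π)] dk`
is harmonic in the open lower half-plane (away from the points `(±π,0)`,
which lie on its boundary). -/
theorem trapped_mode_potential_harmonic :
    ∀ p : ℝ × ℝ, p.2 < 0 →
      fderiv ℝ (fun q : ℝ × ℝ =>
          fderiv ℝ (fun r : ℝ × ℝ =>
            ∫ k in Ioi (0:ℝ),
              k * Real.exp (k * r.2) / (k - 1) *
                (Real.sin (k * (r.1 - π)) - Real.sin (k * (r.1 + π)))) q (1, 0)) p (1, 0)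
      + fderiv ℝ (fun q : ℝ × ℝ =>
          fderiv ℝ (fun r : ℝ × ℝ =>
            ∫ k in Ioi (0:ℝ),
              k * Real.exp (k * r.2) / (k - 1) *
                (Real.sin (k * (r.1 - π)) - Real.sin (k * (r.1 + π)))) q (0, 1)) p (0, 1)
      = 0 := by
  intro p hp
  simp only [TrappedMode.integrand_eq_amplitude_mul_wave]
  exact TrappedMode.laplacian_waveIntegral TrappedMode.measurable_amplitude
    (m := 1) (fun _ hk => by simpa using TrappedMode.abs_amplitude_le hk) 0 hp
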